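/- arXiv:1207.6764 — 3 statements merged into one kernel-verified Lean document; each statement's English description precedes it below -/
import Mathlib

section
/- Let x1, x2, x3, d1, d2, d3 be positive rationals and L a rational number satisfying the eight factor equations: x1²+x2²+x3²−L² = 0, and Σ w_i·f_i = 0 where f1 = x2²+x3²−d1², f2 = x3²+x1²−d2², f3 = x1²+x2²−d3², for each weight family w_i ∈ {1, d_i, x_i, x_i·d_i, x_i², d_i², x_i²·d_i²}. Then f1 = f2 = f3 = 0, i.e., the numbers solve the original perfect cuboid equations. -/
/-- Helper: under the key equations and `x1 = x2`, the first face equation holds. -/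
lemma stmt_1_aux2 (x1 x2 x3 d1 d2 d3 : ℚ)
    (hx : x1 = x2)
    (h2 : (x2^2+x3^2-d1^2) + (x3^2+x1^2-d2^2) + (x1^2+x2^2-d3^2) = 0)
    (h3 : d1*(x2^2+x3^2-d1^2) + d2*(x3^2+x1^2-d2^2) + d3*(x1^2+x2^2-d3^2) = 0)
    (h4 : x1*(x2^2+x3^2-d1^2) + x2*(x3^2+x1^2-d2^2) + x3*(x1^2+x2^2-d3^2) = 0)
    (h6 : x1^2*(x2^2+x3^2-d1^2) + x2^2*(x3^2+x1^2-d2^2) + x3^2*(x1^2+x2^2-d3^2) = 0)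
    (h7 : d1^2*(x2^2+x3^2-d1^2) + d2^2*(x3^2+x1^2-d2^2) + d3^2*(x1^2+x2^2-d3^2) = 0) :
    x2^2+x3^2-d1^2 = 0 := by
  subst hx
  have B : (x1^2 + x3^2 - d1^2) * (d1 - d2) * (d1 - d3) = 0 := by
    linear_combination h7 - (d2+d3)*h3 + d2*d3*h2
  have C : (x1^2+x1^2-d3^2) * ((x3-x1) * (x3-x1)) = 0 := by
    linear_combination h6 - (x1+x1)*h4 + x1*x1*h2
  rcases mul_eq_zero.mp B with B1 | B2
  · rcases mul_eq_zero.mp B1 with hf1 | hd12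
    · linear_combination hf1
    · -- d1 = d2
      have hd12' : d1 = d2 := by linarith [sub_eq_zero.mp hd12]
      subst hd12'
      rcases mul_eq_zero.mp C with hf3 | hx31
      · linear_combination h2/2 - hf3/2
      · have hx31' : x3 = x1 := by
          linarith [sub_eq_zero.mp (mul_self_eq_zero.mp hx31)]
        subst hx31'
        have D : (x3^2+x3^2-d3^2) * ((d3-d1) * (d3-d1)) = 0 := by
          linear_combination h7 - (d1+d1)*h3 + d1*d1*h2
        rcases mul_eq_zero.mp D with hf3 | hd31
        · linear_combination h2/2 - hf3/2
        · have hd31' : d3 = d1 := by linarith [sub_eq_zero.mp (mul_self_eq_zero.mp hd31)]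
          subst hd31'
          linear_combination h2/3
  · -- d1 = d3
    have hd13 : d1 = d3 := by linarith [sub_eq_zero.mp B2]
    subst hd13
    rcases mul_eq_zero.mp C with hf3 | hx31
    · -- f3 = 0
      have E : (d1 - d2) * (x1^2 + x3^2 - d1^2) = 0 := by
        linear_combination h3 - d2*h2 + (d2 - d1)*hf3
      rcases mul_eq_zero.mp E with hd12 | hf1
      · have hd12' : d1 = d2 := by linarith [sub_eq_zero.mp hd12]
        subst hd12'
        linear_combination h2/2 - hf3/2
      · exact hf1
    · have hx31' : x3 = x1 := by linarith [sub_eq_zero.mp (mul_self_eq_zero.mp hx31)]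
      subst hx31'
      have D : (x3^2+x3^2-d2^2) * ((d2-d1) * (d2-d1)) = 0 := by
        linear_combination h7 - (d1+d1)*h3 + d1*d1*h2
      rcases mul_eq_zero.mp D with hf2 | hd21
      · linear_combination h2/2 - hf2/2
      · have hd21' : d2 = d1 := by linarith [sub_eq_zero.mp (mul_self_eq_zero.mp hd21)]
        subst hd21'
        linear_combination h2/3

/-- Helper: the first face equation holds. -/
lemma stmt_1_aux (x1 x2 x3 d1 d2 d3 : ℚ)
    (h2 : (x2^2+x3^2-d1^2) + (x3^2+x1^2-d2^2) + (x1^2+x2^2-d3^2) = 0)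
    (h3 : d1*(x2^2+x3^2-d1^2) + d2*(x3^2+x1^2-d2^2) + d3*(x1^2+x2^2-d3^2) = 0)
    (h4 : x1*(x2^2+x3^2-d1^2) + x2*(x3^2+x1^2-d2^2) + x3*(x1^2+x2^2-d3^2) = 0)
    (h6 : x1^2*(x2^2+x3^2-d1^2) + x2^2*(x3^2+x1^2-d2^2) + x3^2*(x1^2+x2^2-d3^2) = 0)
    (h7 : d1^2*(x2^2+x3^2-d1^2) + d2^2*(x3^2+x1^2-d2^2) + d3^2*(x1^2+x2^2-d3^2) = 0) :
    x2^2+x3^2-d1^2 = 0 := by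
  have A : (x2^2+x3^2-d1^2) * (x1-x2) * (x1-x3) = 0 := by
    linear_combination h6 - (x2+x3)*h4 + x2*x3*h2
  rcases mul_eq_zero.mp A with A1 | A2
  · rcases mul_eq_zero.mp A1 with hf1 | hx12
    · exact hf1
    · exact stmt_1_aux2 x1 x2 x3 d1 d2 d3 (by linarith [sub_eq_zero.mp hx12])
        h2 h3 h4 h6 h7
  · have hx13 : x1 = x3 := by linarith [sub_eq_zero.mp A2]
    have := stmt_1_aux2 x1 x3 x2 d1 d3 d2 hx13
      (by linear_combination h2) (by linear_combination h3)
      (by linear_combination h4) (by linear_combination h6)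
      (by linear_combination h7)
    linear_combination this

theorem stmt_1 (x1 x2 x3 d1 d2 d3 L : ℚ)
    (hx1 : 0 < x1) (hx2 : 0 < x2) (hx3 : 0 < x3)
    (hd1 : 0 < d1) (hd2 : 0 < d2) (hd3 : 0 < d3)
    (h1 : x1^2 + x2^2 + x3^2 - L^2 = 0)
    (h2 : (x2^2+x3^2-d1^2) + (x3^2+x1^2-d2^2) + (x1^2+x2^2-d3^2) = 0)
    (h3 : d1*(x2^2+x3^2-d1^2) + d2*(x3^2+x1^2-d2^2) + d3*(x1^2+x2^2-d3^2) = 0)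
    (h4 : x1*(x2^2+x3^2-d1^2) + x2*(x3^2+x1^2-d2^2) + x3*(x1^2+x2^2-d3^2) = 0)
    (h5 : x1*d1*(x2^2+x3^2-d1^2) + x2*d2*(x3^2+x1^2-d2^2) + x3*d3*(x1^2+x2^2-d3^2) = 0)
    (h6 : x1^2*(x2^2+x3^2-d1^2) + x2^2*(x3^2+x1^2-d2^2) + x3^2*(x1^2+x2^2-d3^2) = 0)
    (h7 : d1^2*(x2^2+x3^2-d1^2) + d2^2*(x3^2+x1^2-d2^2) + d3^2*(x1^2+x2^2-d3^2) = 0)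
    (h8 : x1^2*d1^2*(x2^2+x3^2-d1^2) + x2^2*d2^2*(x3^2+x1^2-d2^2) + x3^2*d3^2*(x1^2+x2^2-d3^2) = 0) :
    x2^2+x3^2-d1^2 = 0 ∧ x3^2+x1^2-d2^2 = 0 ∧ x1^2+x2^2-d3^2 = 0 := by
  refine ⟨stmt_1_aux x1 x2 x3 d1 d2 d3 h2 h3 h4 h6 h7, ?_, ?_⟩
  · have := stmt_1_aux x2 x3 x1 d2 d3 d1
      (by linear_combination h2) (by linear_combination h3)
      (by linear_combination h4) (by linear_combination h6)
      (by linear_combination h7)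
    linear_combination this
  · have := stmt_1_aux x3 x1 x2 d3 d1 d2
      (by linear_combination h2) (by linear_combination h3)
      (by linear_combination h4) (by linear_combination h6)
      (by linear_combination h7)
    linear_combination this
end

section
/- For any rational parameters b and c with D := b²c²+2b²−3b²c+c−bc²+2b ≠ 0, the values x = −b(c²+2−4c)/D, y = −b(c²+2−2c)/D, z = −(b²c²+2b²−3b²c−c)/D satisfy the equation (2x)² + (y²+1−z²)² = 8y². -/
theorem stmt_4 (b c : ℚ) (hD : b^2*c^2 + 2*b^2 - 3*b^2*c + c - b*c^2 + 2*b ≠ 0) :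
    let D := b^2*c^2 + 2*b^2 - 3*b^2*c + c - b*c^2 + 2*b
    let x := -(b*(c^2 + 2 - 4*c))/D
    let y := -(b*(c^2 + 2 - 2*c))/D
    let z := -(b^2*c^2 + 2*b^2 - 3*b^2*c - c)/D
    (2*x)^2 + (y^2 + 1 - z^2)^2 = 8*y^2 := by
  intro D x y z
  have hD' : D ≠ 0 := hD
  simp only [x, y, z]
  field_simp [x, y, z, D]
  simp only [D]
  ring
end

section
/- Let x1,x2,x3,d1,d2,d3,L be rationals with L = 1 and suppose the perfect-cuboid equations hold: x1²+x2²+x3² = 1, x2²+x3² = d1², x3²+x1² = d2², x1²+x2² = d3², with all d_i > 0 and x_i > 0. Then the quantities E11 = x1d2+d1x2+x2d3+d2x3+x3d1+d3x1, E01 = d1+d2+d3, E10 = x1+x2+x3 satisfy (2E11)² + (E01² + 1 − E10²)² = 8E01². -/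
theorem stmt_13 (x1 x2 x3 d1 d2 d3 : ℚ)
    (hx1 : 0 < x1) (hx2 : 0 < x2) (hx3 : 0 < x3)
    (hd1 : 0 < d1) (hd2 : 0 < d2) (hd3 : 0 < d3)
    (h1 : x1^2 + x2^2 + x3^2 = 1)
    (h2 : x2^2 + x3^2 = d1^2)
    (h3 : x3^2 + x1^2 = d2^2)
    (h4 : x1^2 + x2^2 = d3^2) :
    (2*(x1*d2 + d1*x2 + x2*d3 + d2*x3 + x3*d1 + d3*x1))^2
      + ((d1+d2+d3)^2 + 1 - (x1+x2+x3)^2)^2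
      = 8*(d1+d2+d3)^2 := by
  linear_combination
    (6 - 6*d3^2 - 12*d2*d3 - 6*d2^2 - 4*d1*d3 - 4*d1*d2 - d1^2 - 3*x3^2 - 4*x2*x3
      - 3*x2^2 + 4*x1*x3 + 4*x1*x2 + 2*x1^2) * h2
    + (6 - 6*d3^2 - 4*d2*d3 - d2^2 - 12*d1*d3 - 4*d1*d2 - 9*x3^2 + 4*x2*x3 - 4*x2^2
      - 4*x1*x3 + 4*x1*x2 - 3*x1^2) * h3
    + (6 - d3^2 - 4*d2*d3 - 4*d1*d3 - 12*d1*d2 - 10*x3^2 + 4*x2*x3 - 9*x2^2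
      + 4*x1*x3 - 4*x1*x2 - 9*x1^2) * h4
    + (-1 + 12*d2*d3 + 12*d1*d3 + 12*d1*d2 + 13*x3^2 + 4*x2*x3 + 13*x2^2
      + 4*x1*x3 + 4*x1*x2 + 13*x1^2) * h1
end
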